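/- arXiv:2507.00255 — 4 statements merged into one kernel-verified Lean document; each statement's English description precedes it below -/
import Mathlib

section
/- Let N, τ be positive integers, let Γ₁,…,Γ_τ and E₁,…,E_τ be skew-Hermitian N×N complex matrices, and set V_k = exp(Γ_k), D_k = ∫₀¹ exp((1−s)Γ_k) · E_k · exp(sΓ_k) ds, U = V_τ ⋯ V₁, and X_k = V_τ ⋯ V_{k+1} · D_k · V_{k−1} ⋯ V₁ (empty products being the identity). Let U_f be a unitary N×N matrix. If the gate fidelity is perfect, i.e. (1/N)|tr(U_fᴴ U)| = 1, then the differential sensitivity vanishes: ∑_{k=1}^{τ} Re( tr(U_fᴴ X_k) · tr(Uᴴ U_f) ) = 0. -/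
open Matrix NormedSpace Finset

attribute [local instance] Matrix.linftyOpNormedRing Matrix.linftyOpNormedAlgebra

/-- The ordered product `f (b-1) * f (b-2) * ⋯ * f a` of matrices (the identity
when `b ≤ a`), with later factors on the left. -/
noncomputable def ordProd {N : ℕ} (f : ℕ → Matrix (Fin N) (Fin N) ℂ) (a b : ℕ) :
    Matrix (Fin N) (Fin N) ℂ :=
  (((List.range' a (b - a)).reverse).map f).prod

open scoped ComplexOrder

/-! Perfect fidelity forces `W = U_fᴴ U`, a unitary with `|tr W| = N`, to be a phase times the
identity: the Frobenius norm `tr ((W - c • 1)ᴴ (W - c • 1))` with `c = tr W / N` vanishes. Hence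
every summand equals `N · tr (Uᴴ X_k)`. Conjugating away the unitary outer factors of `U` and `X_k`
leaves `tr (V_kᴴ D_k)`, and under the integral `exp (-Γ) exp ((1 - s) Γ) E exp (s Γ)` is conjugate
to `E`, so this trace is `tr E_k`, which is purely imaginary since `E_k` is skew-Hermitian. -/

section ordProd

variable {N : ℕ} (f : ℕ → Matrix (Fin N) (Fin N) ℂ)

lemma ordProd_self (a : ℕ) : ordProd f a a = 1 := by
  simp [ordProd]

lemma ordProd_succ {a b : ℕ} (h : a ≤ b) : ordProd f a (b + 1) = f b * ordProd f a b := by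
  unfold ordProd
  rw [show b + 1 - a = (b - a) + 1 by omega, List.range'_concat, List.reverse_append,
    List.map_append, List.prod_append, show a + 1 * (b - a) = b by omega]
  simp

lemma ordProd_eq_mul_mul {a k b : ℕ} (hak : a ≤ k) (hkb : k < b) :
    ordProd f a b = ordProd f (k + 1) b * f k * ordProd f a k := by
  induction b, hkb using Nat.le_induction with
  | base => rw [ordProd_succ f hak, ordProd_self, one_mul]
  | succ b hb ih =>
    rw [ordProd_succ f (hak.trans (Nat.le_of_succ_le hb)), ordProd_succ f hb, ih]
    simp only [mul_assoc]

lemma conjTranspose_ordProd_mul_self (hf : ∀ k, (f k)ᴴ * f k = 1) {a b : ℕ} (h : a ≤ b) :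
    (ordProd f a b)ᴴ * ordProd f a b = 1 := by
  induction b, h using Nat.le_induction with
  | base => simp [ordProd_self]
  | succ b hb ih =>
    rw [ordProd_succ f hb, conjTranspose_mul, mul_assoc, ← mul_assoc (f b)ᴴ, hf b, one_mul, ih]

end ordProd

section

variable {n : Type*} [Fintype n]

lemma re_trace_eq_zero_of_conjTranspose_eq_neg {A : Matrix n n ℂ} (hA : Aᴴ = -A) :
    A.trace.re = 0 := by
  have h := congrArg Complex.re (congrArg trace hA)
  rw [trace_conjTranspose, trace_neg] at h
  simp only [Complex.star_def, Complex.conj_re, Complex.neg_re] at h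
  linarith

variable [DecidableEq n]

lemma exp_conjTranspose_mul_self_of_conjTranspose_eq_neg {A : Matrix n n ℂ} (hA : Aᴴ = -A) :
    (exp A)ᴴ * exp A = 1 := by
  rw [← exp_conjTranspose, hA, ← exp_add_of_commute _ _ (Commute.refl A).neg_left,
    neg_add_cancel, exp_zero]

lemma trace_conjTranspose_mul_mul_unitary {A B P Q : Matrix n n ℂ}
    (hP : Pᴴ * P = 1) (hQ : Qᴴ * Q = 1) :
    ((Q * A * P)ᴴ * (Q * B * P)).trace = (Aᴴ * B).trace := by
  have hP' : P * Pᴴ = 1 := mul_eq_one_comm.mp hP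
  simp only [conjTranspose_mul, mul_assoc]
  rw [← mul_assoc Qᴴ, hQ, one_mul, trace_mul_comm]
  simp only [mul_assoc, hP', mul_one]

lemma eq_smul_one_of_norm_trace_eq_card {W : Matrix n n ℂ} (hW : Wᴴ * W = 1)
    (htr : ‖W.trace‖ = Fintype.card n) : W = (W.trace / Fintype.card n) • 1 := by
  rcases isEmpty_or_nonempty n with hn | hn
  · exact Subsingleton.elim _ _
  set t := W.trace
  set c := t / Fintype.card n
  have hN : (Fintype.card n : ℂ) ≠ 0 := Nat.cast_ne_zero.mpr Fintype.card_ne_zero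
  have htt : star t * t = (Fintype.card n : ℂ) ^ 2 := by
    rw [Complex.star_def, mul_comm, Complex.mul_conj, Complex.normSq_eq_norm_sq, htr]
    push_cast; ring
  rw [← sub_eq_zero, ← trace_conjTranspose_mul_self_eq_zero_iff]
  have hfrob : ((W - c • 1)ᴴ * (W - c • 1)).trace
      = Fintype.card n - star c * t - c * star t + star c * c * Fintype.card n := by
    simp only [conjTranspose_sub, conjTranspose_smul, RCLike.star_def, conjTranspose_one, mul_sub,
      sub_mul, hW, Algebra.smul_mul_assoc, one_mul, Algebra.mul_smul_comm, mul_one, trace_sub,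
      trace_one, trace_smul, smul_eq_mul, trace_conjTranspose, t]
    ring
  rw [hfrob]
  simp only [c, star_div₀, star_natCast]
  field_simp
  linear_combination -htt

lemma trace_mul_trace_eq_of_norm_trace_eq_card {U Uf : Matrix n n ℂ} (hU : Uᴴ * U = 1)
    (hUf : Ufᴴ * Uf = 1) (hfid : ‖(Ufᴴ * U).trace‖ = Fintype.card n) (X : Matrix n n ℂ) :
    (Ufᴴ * X).trace * (Uᴴ * Uf).trace = Fintype.card n * (Uᴴ * X).trace := by
  rcases isEmpty_or_nonempty n with hn | hn
  · simp [Matrix.trace]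
  set t := (Ufᴴ * U).trace
  have hN : (Fintype.card n : ℂ) ≠ 0 := Nat.cast_ne_zero.mpr Fintype.card_ne_zero
  have hUU : U * Uᴴ = 1 := mul_eq_one_comm.mp hU
  have hW : (Ufᴴ * U)ᴴ * (Ufᴴ * U) = 1 := by
    rw [conjTranspose_mul, conjTranspose_conjTranspose, mul_assoc, ← mul_assoc Uf,
      mul_eq_one_comm.mp hUf, one_mul, hU]
  have hUf' : Ufᴴ = (t / Fintype.card n) • Uᴴ := by
    rw [← smul_one_mul, ← eq_smul_one_of_norm_trace_eq_card hW hfid, mul_assoc, hUU, mul_one]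
  have htrace : (Uᴴ * Uf).trace = star t := by
    rw [← trace_conjTranspose, conjTranspose_mul, conjTranspose_conjTranspose]
  have htt : t * star t = (Fintype.card n : ℂ) ^ 2 := by
    rw [Complex.star_def, Complex.mul_conj, Complex.normSq_eq_norm_sq, hfid]
    push_cast; ring
  rw [htrace, hUf', smul_mul, trace_smul, smul_eq_mul]
  field_simp
  linear_combination (Uᴴ * X).trace * htt

lemma trace_exp_neg_mul_integral_exp_mul_exp (Γ E : Matrix n n ℂ) :
    (exp (-Γ) * ∫ s in (0:ℝ)..1, exp (((1 - s : ℝ) : ℂ) • Γ) * E * exp ((s : ℂ) • Γ)).trace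
      = E.trace := by
  have hexp : ∀ a b : ℂ, exp (a • Γ) * exp (b • Γ) = exp ((a + b) • Γ) := fun a b => by
    rw [add_smul, exp_add_of_commute _ _ (((Commute.refl Γ).smul_left a).smul_right b)]
  have hpt : ∀ s : ℝ,
      (exp (-Γ) * (exp (((1 - s : ℝ) : ℂ) • Γ) * E * exp ((s : ℂ) • Γ))).trace = E.trace := by
    intro s
    rw [← neg_one_smul ℂ Γ, ← mul_assoc, ← mul_assoc, hexp, trace_mul_comm, ← mul_assoc, hexp,
      show (s : ℂ) + (-1 + ((1 - s : ℝ) : ℂ)) = 0 by push_cast; ring, zero_smul, exp_zero, one_mul]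
  let L : Matrix n n ℂ →L[ℂ] ℂ :=
    (traceLinearMap n ℂ ℂ ∘ₗ LinearMap.mulLeft ℂ (exp (-Γ))).toContinuousLinearMap
  have hcont : Continuous fun s : ℝ => exp (((1 - s : ℝ) : ℂ) • Γ) * E * exp ((s : ℂ) • Γ) := by
    fun_prop
  calc (exp (-Γ) * ∫ s in (0:ℝ)..1, exp (((1 - s : ℝ) : ℂ) • Γ) * E * exp ((s : ℂ) • Γ)).trace
      = L (∫ s in (0:ℝ)..1, exp (((1 - s : ℝ) : ℂ) • Γ) * E * exp ((s : ℂ) • Γ)) := rfl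
    _ = ∫ s in (0:ℝ)..1, L (exp (((1 - s : ℝ) : ℂ) • Γ) * E * exp ((s : ℂ) • Γ)) :=
      (L.intervalIntegral_comp_comm (hcont.intervalIntegrable (μ := MeasureTheory.volume) 0 1)).symm
    _ = ∫ _ in (0:ℝ)..1, E.trace := intervalIntegral.integral_congr fun s _ => hpt s
    _ = E.trace := by simp

end

theorem vanishing_gate_sensitivity_general (N τ : ℕ)
    (Γ E : ℕ → Matrix (Fin N) (Fin N) ℂ)
    (hΓ : ∀ k, (Γ k)ᴴ = -(Γ k)) (hE : ∀ k, (E k)ᴴ = -(E k))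
    (V : ℕ → Matrix (Fin N) (Fin N) ℂ) (hV : ∀ k, V k = exp (Γ k))
    (D : ℕ → Matrix (Fin N) (Fin N) ℂ)
    (hD : ∀ k, D k = ∫ s in (0:ℝ)..1,
      exp (((1 - s : ℝ) : ℂ) • Γ k) * E k * exp ((s : ℂ) • Γ k))
    (U : Matrix (Fin N) (Fin N) ℂ) (hU : U = ordProd V 0 τ)
    (X : ℕ → Matrix (Fin N) (Fin N) ℂ)
    (hX : ∀ k, X k = ordProd V (k + 1) τ * D k * ordProd V 0 k)
    (Uf : Matrix (Fin N) (Fin N) ℂ) (hUf : Ufᴴ * Uf = 1)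
    (hfid : (1 / N : ℝ) * ‖(Ufᴴ * U).trace‖ = 1) :
    ∑ k ∈ Finset.range τ,
      ((Ufᴴ * X k).trace * (Uᴴ * Uf).trace).re = 0 := by
  have hVu : ∀ k, (V k)ᴴ * V k = 1 := fun k =>
    hV k ▸ exp_conjTranspose_mul_self_of_conjTranspose_eq_neg (hΓ k)
  have hUu : Uᴴ * U = 1 := hU ▸ conjTranspose_ordProd_mul_self V hVu (Nat.zero_le τ)
  have hcard : ‖(Ufᴴ * U).trace‖ = Fintype.card (Fin N) := by
    have hN : (N : ℝ) ≠ 0 := by rintro h; simp [h] at hfid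
    rw [Fintype.card_fin]
    field_simp at hfid
    linarith
  refine Finset.sum_eq_zero fun k hk => ?_
  have hsplit : U = ordProd V (k + 1) τ * V k * ordProd V 0 k :=
    hU ▸ ordProd_eq_mul_mul V (Nat.zero_le k) (Finset.mem_range.mp hk)
  have htrace : (Uᴴ * X k).trace = (E k).trace := by
    rw [hsplit, hX, trace_conjTranspose_mul_mul_unitary
      (conjTranspose_ordProd_mul_self V hVu (Nat.zero_le k))
      (conjTranspose_ordProd_mul_self V hVu (Finset.mem_range.mp hk)),
      hV, ← exp_conjTranspose, hΓ, hD]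
    exact trace_exp_neg_mul_integral_exp_mul_exp _ _
  rw [trace_mul_trace_eq_of_norm_trace_eq_card hUu hUf hcard, htrace, Fintype.card_fin]
  simp [re_trace_eq_zero_of_conjTranspose_eq_neg (hE k)]

/-- **Theorem 2.** Perfect gate fidelity implies vanishing
differential sensitivity: with `V k = exp (Γ k)`,
`D k = ∫₀¹ exp((1-s)Γₖ) Eₖ exp(sΓₖ) ds`, `U = V_{τ-1} ⋯ V_0`,
`X k = V_{τ-1} ⋯ V_{k+1} * D k * V_{k-1} ⋯ V_0`, and `U_f` unitary, if
`(1/N)|tr(U_fᴴ U)| = 1` then `∑ₖ Re(tr(U_fᴴ X k) tr(Uᴴ U_f)) = 0`. -/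
theorem vanishing_gate_sensitivity (N τ : ℕ) (hN : 0 < N) (hτ : 0 < τ)
    (Γ E : ℕ → Matrix (Fin N) (Fin N) ℂ)
    (hΓ : ∀ k, (Γ k)ᴴ = -(Γ k)) (hE : ∀ k, (E k)ᴴ = -(E k))
    (V : ℕ → Matrix (Fin N) (Fin N) ℂ) (hV : ∀ k, V k = exp (Γ k))
    (D : ℕ → Matrix (Fin N) (Fin N) ℂ)
    (hD : ∀ k, D k = ∫ s in (0:ℝ)..1,
      exp (((1 - s : ℝ) : ℂ) • Γ k) * E k * exp ((s : ℂ) • Γ k))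
    (U : Matrix (Fin N) (Fin N) ℂ) (hU : U = ordProd V 0 τ)
    (X : ℕ → Matrix (Fin N) (Fin N) ℂ)
    (hX : ∀ k, X k = ordProd V (k + 1) τ * D k * ordProd V 0 k)
    (Uf : Matrix (Fin N) (Fin N) ℂ) (hUf : Ufᴴ * Uf = 1)
    (hfid : (1 / N : ℝ) * ‖(Ufᴴ * U).trace‖ = 1) :
    ∑ k ∈ Finset.range τ,
      ((Ufᴴ * X k).trace * (Uᴴ * Uf).trace).re = 0 :=
  vanishing_gate_sensitivity_general N τ Γ E hΓ hE V hV D hD U hU X hX Uf hUf hfid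
end

section
/- Let N be a positive integer and let U and U_f be unitary N×N complex matrices. If (1/N)|tr(U_fᴴ U)| = 1, then there exists φ ∈ ℝ such that U_f = e^{−iφ} U. -/
/-!
For a unitary `V` with `|tr V| = N` put `c = tr V / N`, so `|c| = 1` and `c̄ tr V = N`. Then
`tr ((V - c)ᴴ (V - c)) = N - 2 Re (c̄ tr V) + |c|² N = 0`, hence `V = c • 1`.
Applied to `V = U_fᴴ U` this gives `U = c • U_f`.
-/

open Matrix
open scoped ComplexOrder

namespace Matrix

variable {𝕜 n : Type*} [RCLike 𝕜] [Fintype n] [DecidableEq n] {V : Matrix n n 𝕜}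

theorem eq_trace_div_card_smul_one_of_mem_unitaryGroup (hV : V ∈ unitaryGroup n 𝕜)
    (htr : ‖V.trace‖ = Fintype.card n) : V = (V.trace / Fintype.card n) • 1 := by
  rcases isEmpty_or_nonempty n with hn | hn
  · exact Subsingleton.elim _ _
  have hV' : Vᴴ * V = 1 := mem_unitaryGroup_iff'.mp hV
  have hN : (Fintype.card n : 𝕜) ≠ 0 := Nat.cast_ne_zero.mpr Fintype.card_ne_zero
  have ht : star V.trace * V.trace = (Fintype.card n : 𝕜) ^ 2 := by
    rw [RCLike.star_def, RCLike.conj_mul, htr, RCLike.ofReal_natCast]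
  rw [← sub_eq_zero, ← trace_conjTranspose_mul_self_eq_zero_iff]
  simp only [conjTranspose_sub, conjTranspose_smul, conjTranspose_one, sub_mul, mul_sub,
    smul_mul, Matrix.mul_smul, Matrix.one_mul, Matrix.mul_one, hV', smul_smul, trace_sub,
    trace_smul, trace_one, trace_conjTranspose, smul_eq_mul, star_div₀, star_natCast]
  field_simp
  linear_combination -ht

theorem exists_norm_eq_one_and_eq_smul_one_of_mem_unitaryGroup [Nonempty n]
    (hV : V ∈ unitaryGroup n 𝕜) (htr : ‖V.trace‖ = Fintype.card n) :
    ∃ c : 𝕜, ‖c‖ = 1 ∧ V = c • 1 :=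
  ⟨_, by rw [norm_div, htr, RCLike.norm_natCast, div_self (by positivity)],
    eq_trace_div_card_smul_one_of_mem_unitaryGroup hV htr⟩

end Matrix

theorem perfect_gate_fidelity_phase_general (N : ℕ)
    (U Uf : Matrix (Fin N) (Fin N) ℂ)
    (hU : Uᴴ * U = 1) (hUf : Ufᴴ * Uf = 1)
    (hfid : (1 / N : ℝ) * ‖(Ufᴴ * U).trace‖ = 1) :
    ∃ φ : ℝ, Uf = Complex.exp (-(φ * Complex.I)) • U := by
  have hUf' : Uf ∈ unitaryGroup (Fin N) ℂ := mem_unitaryGroup_iff'.mpr hUf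
  have hV : Ufᴴ * U ∈ unitaryGroup (Fin N) ℂ :=
    mul_mem (Unitary.star_mem hUf') (mem_unitaryGroup_iff'.mpr hU)
  have hN : N ≠ 0 := by
    rintro rfl
    simp at hfid
  have : Nonempty (Fin N) := Fin.pos_iff_nonempty.mp (by omega)
  have htr : ‖(Ufᴴ * U).trace‖ = Fintype.card (Fin N) := by
    rw [Fintype.card_fin]
    field_simp at hfid
    exact hfid
  obtain ⟨c, hc, hVc⟩ := exists_norm_eq_one_and_eq_smul_one_of_mem_unitaryGroup hV htr
  obtain ⟨φ, rfl⟩ := (Complex.norm_eq_one_iff c).mp hc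
  have hU_eq : U = Uf * (Ufᴴ * U) := by
    rw [← Matrix.mul_assoc, ← star_eq_conjTranspose, Unitary.mul_star_self_of_mem hUf',
      Matrix.one_mul]
  refine ⟨φ, ?_⟩
  rw [hU_eq, hVc, Matrix.mul_smul, Matrix.mul_one, smul_smul, ← Complex.exp_add,
    neg_add_cancel, Complex.exp_zero, one_smul]

/-- Perfect gate fidelity `(1/N)|tr(U_fᴴ U)| = 1` for unitary
`U`, `U_f` forces agreement up to a global phase: `U_f = e^{-iφ} U`. -/
theorem perfect_gate_fidelity_phase (N : ℕ) (hN : 0 < N)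
    (U Uf : Matrix (Fin N) (Fin N) ℂ)
    (hU : Uᴴ * U = 1) (hUf : Ufᴴ * Uf = 1)
    (hfid : (1 / N : ℝ) * ‖(Ufᴴ * U).trace‖ = 1) :
    ∃ φ : ℝ, Uf = Complex.exp (-(φ * Complex.I)) • U :=
  perfect_gate_fidelity_phase_general N U Uf hU hUf hfid
end

section
/- Let Γ be an N×N complex matrix admitting a spectral decomposition Γ = ∑_{p=1}^{N} iλ_p Π_p, where λ₁,…,λ_N are real numbers and Π₁,…,Π_N are N×N matrices satisfying Π_pᴴ = Π_p, Π_p Π_q = 0 for p ≠ q, Π_p Π_p = Π_p, and ∑_{p=1}^{N} Π_p = I. Then for any N×N complex matrices σ_n and σ_m, ∫₀¹ tr( exp(−sΓ) · σ_n · exp(sΓ) · σ_mᴴ ) ds = ∑_{p,q=1}^{N} tr( Π_q σ_n Π_p σ_mᴴ ) · e^{i(λ_p−λ_q)/2} · sinc((λ_p−λ_q)/2). -/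
/-!
The spectral projections form a complete family of orthogonal idempotents, so every power
of `Γ = ∑ₚ iλₚ Πₚ` is `∑ₚ (iλₚ)ⁿ Πₚ`, and summing the exponential series gives
`exp (sΓ) = ∑ₚ e^{isλₚ} Πₚ`. The integrand is then the finite sum
`∑_{p,q} tr(Π_q σₙ Π_p σₘᴴ) e^{is(λₚ - λ_q)}`, and `∫₀¹ e^{ias} ds = e^{ia/2} sinc (a/2)`.
-/

open Matrix NormedSpace Finset

/-- The unnormalized cardinal sine function, `sinc x = sin x / x` with `sinc 0 = 1`. -/
noncomputable def sinc (x : ℝ) : ℝ := if x = 0 then 1 else Real.sin x / x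

namespace CompleteOrthogonalIdempotents

variable {ι : Type*} [Fintype ι]

theorem pow_sum_smul {R A : Type*} [CommSemiring R] [Semiring A] [Algebra R A] {e : ι → A}
    (he : CompleteOrthogonalIdempotents e) (c : ι → R) (n : ℕ) :
    (∑ i, c i • e i) ^ n = ∑ i, c i ^ n • e i := by
  classical
  induction n with
  | zero => simp [he.complete]
  | succ n ih =>
    simp only [pow_succ, ih, sum_mul_sum, smul_mul_smul_comm, he.mul_eq, smul_ite, smul_zero,
      sum_ite_eq, mem_univ, if_true]

variable {𝕂 𝔸 : Type*} [RCLike 𝕂] [NormedRing 𝔸] [NormedAlgebra 𝕂 𝔸] [CompleteSpace 𝔸]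
  {e : ι → 𝔸}

theorem exp_sum_smul (he : CompleteOrthogonalIdempotents e) (c : ι → 𝕂) :
    exp (∑ i, c i • e i) = ∑ i, exp (c i) • e i := by
  refine (exp_series_hasSum_exp' (𝕂 := 𝕂) _).unique ?_
  simpa only [he.pow_sum_smul, smul_sum, smul_smul, smul_eq_mul] using
    hasSum_sum fun i _ => (exp_series_hasSum_exp' (𝕂 := 𝕂) (c i)).smul_const (e i)

theorem exp_neg_smul_mul_mul_exp_smul (he : CompleteOrthogonalIdempotents e) (c : ι → 𝕂)
    (t : 𝕂) (x : 𝔸) :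
    exp ((-t) • ∑ i, c i • e i) * x * exp (t • ∑ i, c i • e i) =
      ∑ i, ∑ j, exp ((c i - c j) * t) • (e j * x * e i) := by
  simp only [smul_sum, smul_smul, he.exp_sum_smul, sum_mul, mul_sum, smul_mul_assoc,
    mul_smul_comm]
  refine sum_congr rfl fun i _ => sum_congr rfl fun j _ => ?_
  rw [← exp_add]
  ring_nf

end CompleteOrthogonalIdempotents

theorem integral_exp_I_mul_zero_one (a : ℝ) :
    ∫ s in (0:ℝ)..1, Complex.exp (Complex.I * a * s) =
      Complex.exp (((a / 2 : ℝ) : ℂ) * Complex.I) * ((sinc (a / 2) : ℝ) : ℂ) := by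
  rcases eq_or_ne a 0 with rfl | ha
  · simp [sinc]
  have ha' : (a : ℂ) ≠ 0 := by exact_mod_cast ha
  rw [integral_exp_mul_complex (mul_ne_zero Complex.I_ne_zero ha'), sinc,
    if_neg (by simpa using ha)]
  push_cast
  -- `e^{ia} - 1 = e^{ia/2} (e^{ia/2} - e^{-ia/2}) = 2i e^{ia/2} sin (a/2)`
  rw [Complex.sin, mul_one, mul_zero, Complex.exp_zero, neg_mul, Complex.exp_neg,
    show Complex.I * (a : ℂ) = (a : ℂ)/2 * Complex.I + (a : ℂ)/2 * Complex.I by ring,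
    Complex.exp_add]
  have hhalf := Complex.exp_ne_zero ((a : ℂ) / 2 * Complex.I)
  field_simp
  ring_nf
  simp [Complex.I_sq]

theorem superoperator_matrix_elements_general (N : ℕ)
    (Γ : Matrix (Fin N) (Fin N) ℂ) (lam : Fin N → ℝ)
    (P : Fin N → Matrix (Fin N) (Fin N) ℂ)
    (horth : ∀ p q, p ≠ q → P p * P q = 0)
    (hsum : ∑ p, P p = 1)
    (hΓ : Γ = ∑ p, (Complex.I * (lam p : ℂ)) • P p)
    (σn σm : Matrix (Fin N) (Fin N) ℂ) :
    (∫ s in (0:ℝ)..1,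
        (exp ((-(s : ℂ)) • Γ) * σn * exp ((s : ℂ) • Γ) * σmᴴ).trace) =
      ∑ p, ∑ q, (P q * σn * P p * σmᴴ).trace *
        Complex.exp ((((lam p - lam q) / 2 : ℝ) : ℂ) * Complex.I) *
          ((sinc ((lam p - lam q) / 2) : ℝ) : ℂ) := by
  have hP : CompleteOrthogonalIdempotents P :=
    CompleteOrthogonalIdempotents.iff_ortho_complete.mpr ⟨horth, hsum⟩
  have hintegrand : ∀ s : ℝ,
      (exp ((-(s : ℂ)) • Γ) * σn * exp ((s : ℂ) • Γ) * σmᴴ).trace =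
        ∑ p, ∑ q, Complex.exp (Complex.I * ↑(lam p - lam q) * s) *
          (P q * σn * P p * σmᴴ).trace := by
    intro s
    have hconj : exp ((-(s : ℂ)) • Γ) * σn * exp ((s : ℂ) • Γ) =
        ∑ p, ∑ q, exp ((Complex.I * lam p - Complex.I * lam q) * s) • (P q * σn * P p) := by
      let := Matrix.linftyOpNormedRing (n := Fin N) (α := ℂ)
      let := Matrix.linftyOpNormedAlgebra (n := Fin N) (R := ℂ) (α := ℂ)
      rw [hΓ]
      exact hP.exp_neg_smul_mul_mul_exp_smul _ _ σn
    simp only [hconj, sum_mul, smul_mul_assoc, trace_sum, trace_smul, smul_eq_mul,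
      ← Complex.exp_eq_exp_ℂ]
    refine sum_congr rfl fun p _ ↦ sum_congr rfl fun q _ ↦ ?_
    congr 2
    push_cast
    ring
  have hcont : ∀ p q, Continuous fun s : ℝ ↦
      Complex.exp (Complex.I * ↑(lam p - lam q) * s) * (P q * σn * P p * σmᴴ).trace :=
    fun p q ↦ by fun_prop
  simp only [hintegrand]
  rw [intervalIntegral.integral_finsetSum fun p _ ↦
    (continuous_finsetSum _ fun q _ ↦ hcont p q).intervalIntegrable 0 1]
  refine sum_congr rfl fun p _ ↦ ?_
  rw [intervalIntegral.integral_finsetSum fun q _ ↦ (hcont p q).intervalIntegrable 0 1]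
  refine sum_congr rfl fun q _ ↦ ?_
  rw [intervalIntegral.integral_mul_const, integral_exp_I_mul_zero_one]
  ring

/-- Matrix elements of the superoperator
`X ↦ ∫₀¹ exp(-sΓ) X exp(sΓ) ds` for a normal `Γ = ∑ₚ iλₚ Πₚ` with spectral
projections `Πₚ`:
`∫₀¹ tr(exp(-sΓ) σₙ exp(sΓ) σₘᴴ) ds
  = ∑_{p,q} tr(Π_q σₙ Π_p σₘᴴ) e^{i(λ_p-λ_q)/2} sinc((λ_p-λ_q)/2)`. -/
theorem superoperator_matrix_elements (N : ℕ)
    (Γ : Matrix (Fin N) (Fin N) ℂ) (lam : Fin N → ℝ)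
    (P : Fin N → Matrix (Fin N) (Fin N) ℂ)
    (hherm : ∀ p, (P p)ᴴ = P p)
    (horth : ∀ p q, p ≠ q → P p * P q = 0)
    (hidem : ∀ p, P p * P p = P p)
    (hsum : ∑ p, P p = 1)
    (hΓ : Γ = ∑ p, (Complex.I * (lam p : ℂ)) • P p)
    (σn σm : Matrix (Fin N) (Fin N) ℂ) :
    (∫ s in (0:ℝ)..1,
        (exp ((-(s : ℂ)) • Γ) * σn * exp ((s : ℂ) • Γ) * σmᴴ).trace) =
      ∑ p, ∑ q, (P q * σn * P p * σmᴴ).trace *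
        Complex.exp ((((lam p - lam q) / 2 : ℝ) : ℂ) * Complex.I) *
          ((sinc ((lam p - lam q) / 2) : ℝ) : ℂ) :=
  superoperator_matrix_elements_general N Γ lam P horth hsum hΓ σn σm
end

section
/- Let Γ and S be N×N complex matrices. Then the map δ ↦ exp(Γ + δS) from ℝ to the N×N complex matrices is differentiable at δ = 0 with derivative ∫₀¹ exp((1−s)Γ) · S · exp(sΓ) ds; that is, d/dδ exp(Γ + δS) |_{δ=0} = ∫₀¹ exp((1−s)Γ) · S · exp(sΓ) ds. -/
open Matrix NormedSpace

attribute [local instance] Matrix.linftyOpNormedRing Matrix.linftyOpNormedAlgebra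

/-! The path `s ↦ exp((1-s)(A+B)) exp(sA)` runs from `exp(A+B)` to `exp A`, and its derivative is
`-exp((1-s)(A+B)) B exp(sA)`; the fundamental theorem of calculus gives Duhamel's formula
`exp(A+B) - exp A = ∫₀¹ exp((1-s)(A+B)) B exp(sA) ds`. With `B = δS` the difference quotient
`(exp(A+δS) - exp A)/δ` is the parametric integral `∫₀¹ exp((1-s)(A+δS)) S exp(sA) ds`, which is
continuous in `δ`; its value at `δ = 0` is therefore the derivative. -/

section DuhamelFormula

variable {𝔸 : Type*} [NormedRing 𝔸] [NormedAlgebra ℝ 𝔸] [CompleteSpace 𝔸]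

@[fun_prop]
theorem exp_continuous_of_normedAlgebra_real : Continuous (exp : 𝔸 → 𝔸) :=
  letI := NormedAlgebra.restrictScalars ℚ ℝ 𝔸
  exp_continuous

theorem hasDerivAt_exp_one_sub_smul_mul_exp_smul (C A : 𝔸) (s : ℝ) :
    HasDerivAt (fun u : ℝ => exp ((1 - u) • C) * exp (u • A))
      (-(exp ((1 - s) • C) * (C - A) * exp (s • A))) s := by
  have hC : HasDerivAt (fun u : ℝ => exp ((1 - u) • C)) (-(C * exp ((1 - s) • C))) s := by
    simpa [Function.comp_def] using
      (hasDerivAt_exp_smul_const' C (1 - s)).scomp s ((hasDerivAt_id s).const_sub 1)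
  refine (hC.mul (hasDerivAt_exp_smul_const' A s)).congr_deriv ?_
  rw [((Commute.refl C).smul_right (1 - s)).exp_right.eq]
  noncomm_ring

theorem exp_add_sub_exp_eq_integral (A B : 𝔸) :
    exp (A + B) - exp A = ∫ s in (0:ℝ)..1, exp ((1 - s) • (A + B)) * B * exp (s • A) := by
  have hderiv (s : ℝ) : HasDerivAt (fun u : ℝ => exp ((1 - u) • (A + B)) * exp (u • A))
      (-(exp ((1 - s) • (A + B)) * B * exp (s • A))) s := by
    simpa using hasDerivAt_exp_one_sub_smul_mul_exp_smul (A + B) A s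
  have hFTC := intervalIntegral.integral_eq_sub_of_hasDerivAt (fun s _ => hderiv s)
    (Continuous.intervalIntegrable (by fun_prop) 0 1)
  simp only [intervalIntegral.integral_neg, sub_self, sub_zero, zero_smul, one_smul, exp_zero,
    mul_one, one_mul] at hFTC
  rw [← neg_sub, ← hFTC, neg_neg]

theorem hasDerivAt_exp_add_smul (A B : 𝔸) :
    HasDerivAt (fun t : ℝ => exp (A + t • B))
      (∫ s in (0:ℝ)..1, exp ((1 - s) • A) * B * exp (s • A)) 0 := by
  set g : ℝ → 𝔸 := fun t => ∫ s in (0:ℝ)..1, exp ((1 - s) • (A + t • B)) * B * exp (s • A)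
  have hg : Continuous g :=
    intervalIntegral.continuous_parametric_intervalIntegral_of_continuous' (by fun_prop) 0 1
  have hslope : ∀ t ∈ ({0}ᶜ : Set ℝ), g t = slope (fun t : ℝ => exp (A + t • B)) 0 t := by
    intro t ht
    rw [slope_def_module, zero_smul, add_zero, sub_zero, exp_add_sub_exp_eq_integral]
    simp_rw [mul_smul_comm, smul_mul_assoc, intervalIntegral.integral_smul, smul_smul,
      inv_mul_cancel₀ (Set.mem_compl_singleton_iff.mp ht), one_smul, g]
  rw [hasDerivAt_iff_tendsto_slope]
  simpa [g] using ((hg.tendsto 0).mono_left nhdsWithin_le_nhds).congr'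
    (Filter.eventuallyEq_of_mem self_mem_nhdsWithin hslope)

end DuhamelFormula

/-- Duhamel / Fréchet derivative of the matrix exponential:
`δ ↦ exp(Γ + δS)` is differentiable at `δ = 0` with derivative
`∫₀¹ exp((1-s)Γ) S exp(sΓ) ds`. -/
theorem hasDerivAt_exp_perturbation (N : ℕ) (Γ S : Matrix (Fin N) (Fin N) ℂ) :
    HasDerivAt (fun δ : ℝ => exp (Γ + (δ : ℂ) • S))
      (∫ s in (0:ℝ)..1, exp (((1 - s : ℝ) : ℂ) • Γ) * S * exp ((s : ℂ) • Γ))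
      0 := by
  simp only [Complex.coe_smul]
  exact hasDerivAt_exp_add_smul Γ S
end
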